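/- Let a_1...a_k and b_1...b_k be congruent walks (k odd, starting in X, ending in Y) in a bipartite graph G, with C_X, C_Y the sets of walk vertices in X, Y respectively. Suppose c_1 ∈ X, c_2 ∈ Y satisfy: c_1c_2 ∉ E(G), c_1 is adjacent to every vertex of C_Y, and c_2 is adjacent to every vertex of C_X. Then (a_1, c_1) Γ (a_k, c_1) and (c_1, b_1) Γ (c_1, b_k). -/

import Mathlib

/-!
Keep the `X`-vertices of the first walk and replace its `Y`-vertices by `c₂`; in the second
walk replace the `X`-vertices by `c₁` and keep its `Y`-vertices. Each new pair of `i`-th edges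
consists of one old edge end on each side together with `c₁` or `c₂`; the old independence
rules out the edge between the two old ends, `c₁c₂ ∉ E(G)` rules out the other one, and
distinctness follows because `c₁` and `c₂` have different neighbourhoods among these vertices.
The second claim is the first one for the swapped pair of walks.
-/

namespace CocompBigraph

variable {V : Type*}

/-- `side` is a bipartition of the simple graph `G`: edges only join the two sides. -/
def IsBipartition (G : SimpleGraph V) (side : V → Bool) : Prop :=
  ∀ u v, G.Adj u v → side u ≠ side v

/-- Two edges `xy`, `x'y'` (with `x, x'` on one side and `y, y'` on the other) are
independent: they are disjoint and neither `xy'` nor `x'y` is an edge. -/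
def Indep (G : SimpleGraph V) (x y x' y' : V) : Prop :=
  G.Adj x y ∧ G.Adj x' y' ∧ x ≠ x' ∧ y ≠ y' ∧ ¬ G.Adj x y' ∧ ¬ G.Adj x' y

/-- `w` is a walk of length `n` in `G` (vertices `w 0, …, w n`). -/
def IsWalk (G : SimpleGraph V) (n : ℕ) (w : ℕ → V) : Prop :=
  ∀ i < n, G.Adj (w i) (w (i+1))

/-- Two walks of the same length `n`, beginning on the same side, are congruent if
for each `i` their `i`-th edges are independent. -/
def CongWalks (G : SimpleGraph V) (side : V → Bool) (n : ℕ) (w w' : ℕ → V) : Prop :=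
  side (w 0) = side (w' 0) ∧
  IsWalk G n w ∧ IsWalk G n w' ∧
  ∀ i < n, Indep G (w i) (w (i+1)) (w' i) (w' (i+1))

/-- `(a,b) Γ (f,g)`: there are congruent walks from `a` to `f` and from `b` to `g`. -/
def Gamma (G : SimpleGraph V) (side : V → Bool) (a b f g : V) : Prop :=
  ∃ n, ∃ w w' : ℕ → V, CongWalks G side n w w' ∧
    w 0 = a ∧ w' 0 = b ∧ w n = f ∧ w' n = g

/-- A pair of distinct vertices `u, v` is invertible if there are congruent walks
from `u` to `v` and from `v` to `u`. -/
def InvertiblePair (G : SimpleGraph V) (side : V → Bool) (u v : V) : Prop :=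
  u ≠ v ∧ Gamma G side u v v u

/-- A pair `(a,b)` is relevant if its implication class contains at least two pairs. -/
def Relevant (G : SimpleGraph V) (side : V → Bool) (a b : V) : Prop :=
  ∃ f g, Gamma G side a b f g ∧ (f, g) ≠ (a, b)

/-- An orientation of the complement of `G`: every pair of distinct vertices on the
same side gets exactly one direction (cross pairs stay undirected). -/
def IsOrientation (side : V → Bool) (O : V → V → Prop) : Prop :=
  (∀ u v, O u v → side u = side v ∧ u ≠ v) ∧
  (∀ u v, u ≠ v → side u = side v → (O u v ↔ ¬ O v u))

/-- The orientation `O` is `T`-free: no two independent edges of the bipartite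
complement agree in `O`. -/
def TFree (G : SimpleGraph V) (side : V → Bool) (O : V → V → Prop) : Prop :=
  ∀ x y x' y', side x = side x' → side y = side y' → side x ≠ side y →
    x ≠ x' → y ≠ y' → ¬ G.Adj x y → ¬ G.Adj x' y' →
    G.Adj x y' → G.Adj x' y → ¬ (O x x' ∧ O y y')

/-- The relation `O` has no directed cycle. -/
def OAcyclic (O : V → V → Prop) : Prop :=
  ∀ (n : ℕ) (w : ℕ → V), 0 < n → (∀ i < n, O (w i) (w (i+1))) → w 0 ≠ w n

/-- `G` has an `S`-free pair of orderings: linear orders of the two sides such that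
no two independent edges cross. -/
def SFreePair (G : SimpleGraph V) (side : V → Bool) : Prop :=
  ∃ lt : V → V → Prop,
    (∀ u v, lt u v → side u = side v ∧ u ≠ v) ∧
    (∀ u v, u ≠ v → side u = side v → (lt u v ↔ ¬ lt v u)) ∧
    (∀ u v w, lt u v → lt v w → lt u w) ∧
    (∀ u v w z, side u ≠ side w → lt u v → lt w z →
      G.Adj u z → G.Adj v w → (G.Adj u w ∨ G.Adj v z))

/-- An edge-asteroid: `2k+1` distinct edges `x i — y i` such that for each `i` there
is a walk joining the edges `e (i+k)` and `e (i+k+1)` (including both endpoints of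
each) containing no vertex adjacent to either end of `e i`. -/
def EdgeAsteroid (G : SimpleGraph V) (k : ℕ) (x y : ZMod (2*k+1) → V) : Prop :=
  1 ≤ k ∧
  (∀ i, G.Adj (x i) (y i)) ∧
  (∀ i j : ZMod (2*k+1), i ≠ j → (x i, y i) ≠ (x j, y j)) ∧
  ∀ i : ZMod (2*k+1), ∃ n, ∃ w : ℕ → V, IsWalk G n w ∧ 1 ≤ n ∧
    ((w 0 = x (i+k) ∧ w 1 = y (i+k)) ∨ (w 0 = y (i+k) ∧ w 1 = x (i+k))) ∧
    ((w (n-1) = y (i+k+1) ∧ w n = x (i+k+1)) ∨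
      (w (n-1) = x (i+k+1) ∧ w n = y (i+k+1))) ∧
    ∀ j ≤ n, ¬ G.Adj (w j) (x i) ∧ ¬ G.Adj (w j) (y i)

/-- An asteroid in a graph `H`: `2k+1` distinct vertices such that for each `i` there
is a path joining `v (i+k)` and `v (i+k+1)` none of whose vertices is a neighbour
of `v i`. -/
def Asteroid {W : Type*} (H : SimpleGraph W) (k : ℕ) (v : ZMod (2*k+1) → W) : Prop :=
  1 ≤ k ∧ Function.Injective v ∧
  ∀ i : ZMod (2*k+1), ∃ n, ∃ w : ℕ → W, IsWalk H n w ∧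
    w 0 = v (i+k) ∧ w n = v (i+(k+1)) ∧
    (∀ a ≤ n, ∀ b ≤ n, w a = w b → a = b) ∧
    ∀ j ≤ n, ¬ H.Adj (w j) (v i)

/-- The independence graph `I(G)`: vertices are the edges of `G` (oriented from side
`true` to side `false`), adjacent iff independent. -/
def IndepGraph (G : SimpleGraph V) (side : V → Bool) :
    SimpleGraph {p : V × V // G.Adj p.1 p.2 ∧ side p.1 = true} where
  Adj e f := Indep G e.1.1 e.1.2 f.1.1 f.1.2
  symm := by
    constructor
    rintro e f ⟨h1, h2, h3, h4, h5, h6⟩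
    exact ⟨h2, h1, h3.symm, h4.symm, h6, h5⟩
  loopless := by
    constructor
    rintro e ⟨_, _, h3, _⟩
    exact h3 rfl

/-- A graph is a comparability graph iff it has a transitive orientation. -/
def HasTransitiveOrientation {W : Type*} (H : SimpleGraph W) : Prop :=
  ∃ r : W → W → Prop,
    (∀ u v, r u v → H.Adj u v) ∧
    (∀ u v, H.Adj u v → (r u v ↔ ¬ r v u)) ∧
    (∀ u v w, r u v → r v w → r u w)

/-- The cycle `C_n` on vertex set `ZMod n`. -/
def cycleGraph (n : ℕ) : SimpleGraph (ZMod n) where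
  Adj i j := i ≠ j ∧ (j = i + 1 ∨ i = j + 1)
  symm := by constructor; rintro i j ⟨h, h'⟩; exact ⟨h.symm, h'.symm⟩
  loopless := by constructor; rintro i ⟨h, _⟩; exact h rfl

/-- `G` contains an induced cycle of length `n`. -/
def HasInducedCycle (G : SimpleGraph V) (n : ℕ) : Prop :=
  ∃ f : ZMod n → V, Function.Injective f ∧
    ∀ i j, G.Adj (f i) (f j) ↔ (cycleGraph n).Adj i j

/-- Adjacency of the auxiliary graph `G⁺` on ordered pairs:
`(u,v)` is adjacent to `(v,u)` and to every `(z,w)` such that `uw` and `vz` are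
independent edges of `G`. -/
def AuxAdj (G : SimpleGraph V) (p q : V × V) : Prop :=
  (q.1 = p.2 ∧ q.2 = p.1) ∨
  (G.Adj p.1 q.2 ∧ G.Adj p.2 q.1 ∧ p.1 ≠ p.2 ∧ q.1 ≠ q.2 ∧
    ¬ G.Adj p.1 q.1 ∧ ¬ G.Adj p.2 q.2)

/-- The auxiliary graph `G⁺`, on the set `F` of ordered pairs of distinct same-side
vertices, is bipartite (i.e. properly 2-colourable). -/
def AuxBipartite (G : SimpleGraph V) (side : V → Bool) : Prop :=
  ∃ c : {p : V × V // p.1 ≠ p.2 ∧ side p.1 = side p.2} → Bool,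
    ∀ p q, AuxAdj G p.1 q.1 → c p ≠ c q

/-- `G` is an interval containment bigraph. -/
def IntervalContainment (G : SimpleGraph V) (side : V → Bool) : Prop :=
  ∃ l r : V → ℝ, (∀ v, l v ≤ r v) ∧
    ∀ x y, side x = true → side y = false →
      (G.Adj x y ↔ (l x ≤ l y ∧ r y ≤ r x))

section Congruence

variable {G : SimpleGraph V} {side : V → Bool}

theorem Indep.symm {x y x' y' : V} (h : Indep G x y x' y') : Indep G x' y' x y :=
  ⟨h.2.1, h.1, h.2.2.1.symm, h.2.2.2.1.symm, h.2.2.2.2.2, h.2.2.2.2.1⟩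

theorem Indep.flip {x y x' y' : V} (h : Indep G x y x' y') : Indep G y x y' x' :=
  ⟨h.1.symm, h.2.1.symm, h.2.2.2.1, h.2.2.1, fun h' => h.2.2.2.2.2 h'.symm,
    fun h' => h.2.2.2.2.1 h'.symm⟩

theorem indep_of_not_adj {x y' c₁ c₂ : V} (hxy' : ¬ G.Adj x y') (hx : G.Adj c₂ x)
    (hy' : G.Adj c₁ y') (hc : ¬ G.Adj c₁ c₂) : Indep G x c₂ c₁ y' := by
  refine ⟨hx.symm, hy', ?_, ?_, hxy', hc⟩
  · rintro rfl
    exact hc hx.symm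
  · rintro rfl
    exact hc hy'

theorem CongWalks.symm {n : ℕ} {w w' : ℕ → V} (h : CongWalks G side n w w') :
    CongWalks G side n w' w :=
  ⟨h.1.symm, h.2.2.1, h.2.1, fun i hi => (h.2.2.2 i hi).symm⟩

theorem Gamma.symm {a b f g : V} (h : Gamma G side a b f g) : Gamma G side b a g f := by
  obtain ⟨n, w, w', hcong, ha, hb, hf, hg⟩ := h
  exact ⟨n, w', w, hcong.symm, hb, ha, hg, hf⟩

theorem IsWalk.side_eq_iff_even (hbip : IsBipartition G side) {n : ℕ} {u : ℕ → V}
    (hu : IsWalk G n u) {i : ℕ} (hi : i ≤ n) : side (u i) = side (u 0) ↔ Even i := by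
  induction i with
  | zero => simp
  | succ i ih =>
    have hstep := hbip _ _ (hu i hi)
    rw [Nat.even_add_one, ← ih (Nat.le_of_succ_le hi)]
    revert hstep
    cases side (u i) <;> cases side (u (i + 1)) <;> cases side (u 0) <;> decide

def interleave (u v : ℕ → V) (i : ℕ) : V := if Even i then u i else v i

theorem interleave_of_even {u v : ℕ → V} {i : ℕ} (hi : Even i) : interleave u v i = u i :=
  if_pos hi

theorem interleave_of_odd {u v : ℕ → V} {i : ℕ} (hi : Odd i) : interleave u v i = v i :=
  if_neg (Nat.not_even_iff_odd.mpr hi)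

theorem gamma_of_congWalks {n : ℕ} {w w' : ℕ → V} (hcong : CongWalks G side n w w')
    (hn : Even n) {c₁ c₂ : V} (hside : side (w 0) = side c₁) (hc : ¬ G.Adj c₁ c₂)
    (hc₂w : ∀ i ≤ n, Even i → G.Adj c₂ (w i)) (hc₁w' : ∀ i ≤ n, Odd i → G.Adj c₁ (w' i)) :
    Gamma G side (w 0) c₁ (w n) c₁ := by
  set W := interleave w fun _ => c₂
  set U := interleave (fun _ => c₁) w'
  have hstep : ∀ i < n, Indep G (W i) (W (i + 1)) (U i) (U (i + 1)) := by
    intro i hi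
    obtain ⟨-, -, -, -, hnadj, hnadj'⟩ := hcong.2.2.2 i hi
    rcases Nat.even_or_odd i with he | ho
    · simp only [W, U, interleave_of_even he, interleave_of_odd he.add_one]
      exact indep_of_not_adj hnadj (hc₂w i hi.le he) (hc₁w' (i + 1) hi he.add_one) hc
    · simp only [W, U, interleave_of_odd ho, interleave_of_even ho.add_one]
      exact (indep_of_not_adj (fun h => hnadj' h.symm) (hc₂w (i + 1) hi ho.add_one)
        (hc₁w' i hi.le ho) hc).flip
  refine ⟨n, W, U, ⟨?_, fun i hi => (hstep i hi).1, fun i hi => (hstep i hi).2.1, hstep⟩,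
    ?_, ?_, ?_, ?_⟩ <;>
    simp [W, U, interleave_of_even, hn, hside]

end Congruence

theorem stmt_9_general (G : SimpleGraph V) (side : V → Bool) (hbip : IsBipartition G side)
    (n : ℕ) (w w' : ℕ → V) (hcong : CongWalks G side n w w')
    (hstart : side (w 0) = true) (heven : Even n)
    (c1 c2 : V) (hc1 : side c1 = true)
    (hadj : ¬ G.Adj c1 c2)
    (h1 : ∀ i ≤ n, side (w i) = false → G.Adj c1 (w i))
    (h1' : ∀ i ≤ n, side (w' i) = false → G.Adj c1 (w' i))
    (h2 : ∀ i ≤ n, side (w i) = true → G.Adj c2 (w i))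
    (h2' : ∀ i ≤ n, side (w' i) = true → G.Adj c2 (w' i)) :
    Gamma G side (w 0) c1 (w n) c1 ∧ Gamma G side c1 (w' 0) c1 (w' n) := by
  have hstart' : side (w' 0) = true := hcong.1 ▸ hstart
  have hw : ∀ i ≤ n, (side (w i) = true ↔ Even i) := fun i hi =>
    hstart ▸ hcong.2.1.side_eq_iff_even hbip hi
  have hw' : ∀ i ≤ n, (side (w' i) = true ↔ Even i) := fun i hi =>
    hstart' ▸ hcong.2.2.1.side_eq_iff_even hbip hi
  have hc₂w : ∀ i ≤ n, Even i → G.Adj c2 (w i) := fun i hi he => h2 i hi ((hw i hi).mpr he)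
  have hc₂w' : ∀ i ≤ n, Even i → G.Adj c2 (w' i) := fun i hi he => h2' i hi ((hw' i hi).mpr he)
  have hc₁w : ∀ i ≤ n, Odd i → G.Adj c1 (w i) := fun i hi ho =>
    h1 i hi (Bool.eq_false_iff.mpr ((hw i hi).not.mpr (Nat.not_even_iff_odd.mpr ho)))
  have hc₁w' : ∀ i ≤ n, Odd i → G.Adj c1 (w' i) := fun i hi ho =>
    h1' i hi (Bool.eq_false_iff.mpr ((hw' i hi).not.mpr (Nat.not_even_iff_odd.mpr ho)))
  exact ⟨gamma_of_congWalks hcong heven (hstart.trans hc1.symm) hadj hc₂w hc₁w',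
    (gamma_of_congWalks hcong.symm heven (hstart'.trans hc1.symm) hadj hc₂w' hc₁w).symm⟩

/-- (second case of Proposition 3.1) if `c₁c₂ ∉ E(G)`, `c₁` is adjacent
to every walk vertex on side `Y` and `c₂` to every walk vertex on side `X`, then
`(a₁,c₁) Γ (a_k,c₁)` and `(c₁,b₁) Γ (c₁,b_k)`. -/
theorem stmt_9 (G : SimpleGraph V) (side : V → Bool) (hbip : IsBipartition G side)
    (n : ℕ) (w w' : ℕ → V) (hcong : CongWalks G side n w w')
    (hstart : side (w 0) = true) (heven : Even n)
    (c1 c2 : V) (hc1 : side c1 = true) (hc2 : side c2 = false)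
    (hadj : ¬ G.Adj c1 c2)
    (h1 : ∀ i ≤ n, side (w i) = false → G.Adj c1 (w i))
    (h1' : ∀ i ≤ n, side (w' i) = false → G.Adj c1 (w' i))
    (h2 : ∀ i ≤ n, side (w i) = true → G.Adj c2 (w i))
    (h2' : ∀ i ≤ n, side (w' i) = true → G.Adj c2 (w' i)) :
    Gamma G side (w 0) c1 (w n) c1 ∧ Gamma G side c1 (w' 0) c1 (w' n) :=
  stmt_9_general G side hbip n w w' hcong hstart heven c1 c2 hc1 hadj h1 h1' h2 h2'

end CocompBigraph
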